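/- arXiv:0905.1783 — 2 statements merged into one kernel-verified Lean document; each statement's English description precedes it below -/
import Mathlib

section
/- For all integers l ≥ 0 and m ≥ 1, the ideal I_l of Z[q,q^{-1}] generated by the elements {l-k}_q! · {k}_q! for k = 0, ..., l is contained in the principal ideal generated by ∏_m Φ_m(q)^{f(l,m)}, where Φ_m(q) is the m-th cyclotomic polynomial and f(l,m) = max(0, ⌊(l+1)/m⌋ - 1). -/
/-!
Since `X ^ j - 1 = ∏_{d ∣ j} Φ_d`, the cyclotomic polynomial `Φ_m` occurs in `{n}_q!` once for
each multiple of `m` in `1, …, n`, i.e. `{n}_q! = ∏_m Φ_m ^ ⌊n/m⌋`. So `{l-k}_q! · {k}_q!` is the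
product of the `Φ_m ^ (⌊(l-k)/m⌋ + ⌊k/m⌋)`, and `⌊a/m⌋ + ⌊b/m⌋ ≥ ⌊(a+b+1)/m⌋ - 1` because the
two remainders add up to at most `2m - 2`.
-/

open LaurentPolynomial Finset

noncomputable section

/-- `{i}_q = q^i - 1` in `ℤ[q,q⁻¹]`. -/
def qInt (i : ℤ) : LaurentPolynomial ℤ := T i - 1

/-- `{i}_{q,n} = {i}_q {i-1}_q ⋯ {i-n+1}_q`. -/
def qPoch (i : ℤ) (n : ℕ) : LaurentPolynomial ℤ := ∏ k ∈ range n, qInt (i - k)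

/-- `{n}_q! = {n}_{q,n}`. -/
def qFact (n : ℕ) : LaurentPolynomial ℤ := qPoch n n

/-- The ideal `I_l` of `ℤ[q,q⁻¹]` generated by `{l-k}_q!·{k}_q!`, `k = 0,…,l`. -/
def Iideal (l : ℕ) : Ideal (LaurentPolynomial ℤ) :=
  Ideal.span {x | ∃ k ≤ l, x = qFact (l - k) * qFact k}

theorem Nat.add_add_one_div_le {m : ℕ} (hm : 0 < m) (a b : ℕ) :
    (a + b + 1) / m ≤ a / m + b / m + 1 := by
  refine Nat.lt_succ_iff.mp ((Nat.div_lt_iff_lt_mul hm).mpr ?_)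
  nlinarith [Nat.div_add_mod a m, Nat.div_add_mod b m, Nat.mod_lt a hm, Nat.mod_lt b hm]

namespace Polynomial

variable (R : Type*) [CommRing R]

theorem prod_Icc_cyclotomic_pow_ite_dvd {n N : ℕ} (hn : 0 < n) (hnN : n ≤ N) :
    ∏ m ∈ Icc 1 N, cyclotomic m R ^ (if m ∣ n then 1 else 0) = X ^ n - 1 := by
  have hdivisors : {m ∈ Icc 1 N | m ∣ n} = n.divisors := by
    ext m
    simp only [mem_filter, mem_Icc, Nat.mem_divisors]
    constructor
    · rintro ⟨-, hm⟩
      exact ⟨hm, hn.ne'⟩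
    · rintro ⟨hm, -⟩
      exact ⟨⟨Nat.pos_of_dvd_of_pos hm hn, (Nat.le_of_dvd hn hm).trans hnN⟩, hm⟩
  simp only [pow_ite, pow_one, pow_zero]
  rw [← prod_filter, hdivisors, prod_cyclotomic_eq_X_pow_sub_one hn]

theorem prod_Icc_cyclotomic_pow_div {n N : ℕ} (hnN : n ≤ N) :
    ∏ m ∈ Icc 1 N, cyclotomic m R ^ (n / m) = ∏ j ∈ range n, (X ^ (j + 1) - 1) := by
  induction n with
  | zero => simp
  | succ n ih =>
    rw [prod_congr rfl fun m _ => by rw [Nat.succ_div, pow_add], prod_mul_distrib,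
      ih (by omega), prod_range_succ,
      prod_Icc_cyclotomic_pow_ite_dvd R n.succ_pos hnN]

end Polynomial

theorem qFact_eq_toLaurent (n : ℕ) :
    qFact n = Polynomial.toLaurent (∏ j ∈ range n, (Polynomial.X ^ (j + 1) - 1)) := by
  rw [qFact, qPoch, map_prod, ← prod_range_reflect]
  refine prod_congr rfl fun j hj => ?_
  have hnj : (n : ℤ) - ((n - 1 - j : ℕ) : ℤ) = j + 1 := by
    have := mem_range.mp hj
    omega
  simp [qInt, hnj]

theorem qFact_eq_toLaurent_prod_cyclotomic {n N : ℕ} (hnN : n ≤ N) :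
    qFact n = Polynomial.toLaurent
      (∏ m ∈ Icc 1 N, Polynomial.cyclotomic m ℤ ^ (n / m)) := by
  rw [qFact_eq_toLaurent, Polynomial.prod_Icc_cyclotomic_pow_div ℤ hnN]

theorem stmt0 (l : ℕ) :
    Iideal l ≤ Ideal.span
      {∏ m ∈ Icc 1 (l + 1),
        (Polynomial.cyclotomic m ℤ).toLaurent ^ ((l + 1) / m - 1)} := by
  rw [Iideal, Ideal.span_le]
  rintro _ ⟨k, hk, rfl⟩
  rw [SetLike.mem_coe, Ideal.mem_span_singleton,
    qFact_eq_toLaurent_prod_cyclotomic (N := l + 1) (by omega),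
    qFact_eq_toLaurent_prod_cyclotomic (N := l + 1) (by omega), ← map_mul, ← prod_mul_distrib]
  simp_rw [← map_pow, ← map_prod, ← pow_add]
  refine map_dvd _ (prod_dvd_prod_of_dvd _ _ fun m hm => pow_dvd_pow _ ?_)
  have := Nat.add_add_one_div_le (mem_Icc.mp hm).1 (l - k) k
  rwa [Nat.sub_add_cancel hk, ← Nat.sub_le_iff_le_add] at this
end
end

section
/- For every integer i ≥ 1, the Laurent polynomial {2i+1}_{q,i+1}/{1}_q is not an element of the ideal ({2i+1}_{q,i+1}/{1}_q) · I_i · I_i of Z[q,q^{-1}], where I_i is the ideal generated by {i-k}_q!{k}_q! for 0 ≤ k ≤ i. -/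
/-!
Evaluation at `q = 1` kills `{k}_q!` for every `k ≥ 1`, and each generator of `I_i` contains
such a factor when `i ≥ 1`, so `I_i` is a proper ideal. In the domain `ℤ[q,q⁻¹]`, a nonzero
`g` lying in `(g)·J` forces `1 ∈ J`; with `J = I_i·I_i ⊆ I_i` this is impossible.
-/

open LaurentPolynomial Finset

noncomputable section

lemma Ideal.notMem_span_singleton_mul_of_ne_top {R : Type*} [CommSemiring R] [IsDomain R]
    {a : R} (ha : a ≠ 0) {J : Ideal R} (hJ : J ≠ ⊤) : a ∉ Ideal.span {a} * J := by
  intro h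
  obtain ⟨z, hz, hza⟩ := Ideal.mem_span_singleton_mul.1 h
  have hz1 : z = 1 := mul_left_cancel₀ ha (hza.trans (mul_one a).symm)
  exact hJ ((Ideal.eq_top_iff_one J).2 (hz1 ▸ hz))

lemma qInt_ne_zero {m : ℤ} (hm : m ≠ 0) : qInt m ≠ 0 := by
  rw [qInt, sub_ne_zero, ← T_zero]
  exact fun h => hm (AddMonoidAlgebra.single_left_injective one_ne_zero h)

lemma qPoch_ne_zero {i : ℤ} {n : ℕ} (hn : (n : ℤ) ≤ i) : qPoch i n ≠ 0 :=
  prod_ne_zero_iff.2 fun k hk => qInt_ne_zero (by have := mem_range.1 hk; omega)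

lemma eval₂_one_qInt (m : ℤ) : eval₂ (RingHom.id ℤ) 1 (qInt m) = 0 := by
  simp [qInt, eval₂_T]

lemma eval₂_one_qFact {k : ℕ} (hk : k ≠ 0) : eval₂ (RingHom.id ℤ) 1 (qFact k) = 0 := by
  rw [qFact, qPoch, map_prod]
  exact prod_eq_zero (mem_range.2 (Nat.pos_of_ne_zero hk)) (eval₂_one_qInt _)

lemma Iideal_le_ker_eval₂_one {l : ℕ} (hl : l ≠ 0) :
    Iideal l ≤ RingHom.ker (eval₂ (RingHom.id ℤ) (1 : ℤˣ)) := by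
  rw [Iideal, Ideal.span_le]
  rintro x ⟨k, hk, rfl⟩
  rw [SetLike.mem_coe, RingHom.mem_ker, map_mul]
  rcases eq_or_ne k 0 with rfl | hk0
  · rw [Nat.sub_zero, eval₂_one_qFact hl, zero_mul]
  · rw [eval₂_one_qFact hk0, mul_zero]

lemma Iideal_ne_top {l : ℕ} (hl : l ≠ 0) : Iideal l ≠ ⊤ :=
  ne_top_of_le_ne_top (RingHom.ker_ne_top _) (Iideal_le_ker_eval₂_one hl)

theorem stmt19 (i : ℕ) (hi : 1 ≤ i) (g : LaurentPolynomial ℤ)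
    (hg : g * qInt 1 = qPoch (2 * i + 1) (i + 1)) :
    g ∉ Ideal.span {g} * Iideal i * Iideal i := by
  have hg0 : g ≠ 0 := by
    rintro rfl
    rw [zero_mul] at hg
    exact qPoch_ne_zero (by omega) hg.symm
  have hII : Iideal i * Iideal i ≠ ⊤ :=
    ne_top_of_le_ne_top (Iideal_ne_top (by omega)) Ideal.mul_le_left
  rw [mul_assoc]
  exact Ideal.notMem_span_singleton_mul_of_ne_top hg0 hII
end
end
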